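/- Under the stated hypotheses on j, M, κ, λ, let U_j := {A : A ⊆ 𝒫_κ(λ) and j''λ ∈ j(A)}, let 𝒲 be the collection of ZFSet-functions with domain 𝒫_κ(λ), and for f ∈ 𝒲 let j(f)(j''λ) denote the unique ZFSet c with the ordered pair ⟨j''λ, c⟩ ∈ j(f). Then for all f, g ∈ 𝒲: {x ∈ 𝒫_κ(λ) : f(x) = g(x)} ∈ U_j iff j(f)(j''λ) = j(g)(j''λ), and {x ∈ 𝒫_κ(λ) : f(x) ∈ g(x)} ∈ U_j iff j(f)(j''λ) ∈ j(g)(j''λ). Consequently the relation f ∈_{U_j} g :⟺ {x : f(x) ∈ g(x)} ∈ U_j is well-founded, i.e. U_j is steep. (Single-universe form of Claim 2.4.1.) -/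

import Mathlib

open FirstOrder

/-- The language `L_ε` with a single binary relation symbol (Mathlib's graph language,
whose unique binary relation we interpret as membership). -/
abbrev Lε : FirstOrder.Language := FirstOrder.Language.graph

/-- Any type with a binary relation is an `L_ε`-structure. -/
def memStruc (S : Type*) (r : S → S → Prop) : Lε.Structure S where
  RelMap | .adj => fun x => r (x 0) (x 1)

/-- Satisfaction of an `L_ε`-formula in the structure given by a binary relation `r` on `S`. -/
def RealizeIn (S : Type*) (r : S → S → Prop) {n : ℕ}
    (φ : Lε.Formula (Fin n)) (v : Fin n → S) : Prop :=
  @FirstOrder.Language.Formula.Realize Lε S (memStruc S r) _ φ v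

/-- `x` is a von Neumann ordinal: a transitive set of transitive sets. -/
def IsOrd (x : ZFSet) : Prop := x.IsTransitive ∧ ∀ y ∈ x, ZFSet.IsTransitive y

/-- `f` is an injective ZFSet-function from `x` to `y`. -/
def IsInjFn (x y f : ZFSet) : Prop :=
  ZFSet.IsFunc x y f ∧
    ∀ a ∈ x, ∀ b ∈ x, ∀ c : ZFSet, ZFSet.pair a c ∈ f → ZFSet.pair b c ∈ f → a = b

/-- `f` is a ZFSet-bijection between `x` and `y`. -/
def IsBijFn (x y f : ZFSet) : Prop :=
  IsInjFn x y f ∧ ∀ c ∈ y, ∃ a ∈ x, ZFSet.pair a c ∈ f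

/-- `x` is a cardinal: an ordinal admitting no ZFSet-bijection with any of its elements. -/
def IsCard (x : ZFSet) : Prop := IsOrd x ∧ ∀ y ∈ x, ¬ ∃ f : ZFSet, IsBijFn x y f

/-- `𝒫_κ(λ)`: the ZFSet of all subsets of `λ` admitting a ZFSet-injection into some
element of `κ`. -/
def Pk (κ lam : ZFSet) : ZFSet :=
  ZFSet.sep (fun x => ∃ e ∈ κ, ∃ f : ZFSet, IsInjFn x e f) (ZFSet.powerset lam)

/-- `f` is a ZFSet-function: a single-valued set of (Kuratowski) ordered pairs. -/
def IsZFFunc (f : ZFSet) : Prop :=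
  (∀ p ∈ f, ∃ x y : ZFSet, p = ZFSet.pair x y) ∧
    ∀ x y y' : ZFSet, ZFSet.pair x y ∈ f → ZFSet.pair x y' ∈ f → y = y'

/-- The domain of a ZFSet-function. -/
def dom (f : ZFSet) : ZFSet :=
  ZFSet.sep (fun x => ∃ y : ZFSet, ZFSet.pair x y ∈ f) (ZFSet.sUnion (ZFSet.sUnion f))

/-- `f` is a ZFSet-function with domain `I`. -/
def IsFuncOn (I f : ZFSet) : Prop := IsZFFunc f ∧ dom f = I

open Classical in
/-- The value `f(x)` of a ZFSet-function at `x`. -/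
noncomputable def app (f x : ZFSet) : ZFSet :=
  if h : ∃ y : ZFSet, ZFSet.pair x y ∈ f then h.choose else ∅

/-!
The sets `{x : f(x) = g(x)}` and `{x : f(x) ∈ g(x)}` are first-order definable from `f`, `g` and
`𝒫_κ(λ)` by formulas that mean the same thing in every transitive `∈`-structure, since ordered pairs
and function values are absolute for transitive classes. Elementarity therefore identifies
`j({x : f(x) R g(x)})` with `{x ∈ j(𝒫_κ(λ)) : j(f)(x) R j(g)(x)}`, and evaluating at
`j''λ ∈ j(𝒫_κ(λ))` gives both equivalences. Hence `∈_{U_j}` is contained in the pullback of `∈`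
along `f ↦ j(f)(j''λ)`, so it is well-founded.
-/

open FirstOrder.Language ZFSet

universe u v

def IsFuncDefinedOn (I f : ZFSet) : Prop :=
  (∀ x ∈ I, ∃ y, pair x y ∈ f) ∧ ∀ x y y', pair x y ∈ f → pair x y' ∈ f → y = y'

theorem IsFuncOn.isFuncDefinedOn {I f : ZFSet} (hf : IsFuncOn I f) : IsFuncDefinedOn I f :=
  ⟨fun x hx => (mem_sep.1 (hf.2.symm ▸ hx : x ∈ dom f)).2, hf.1.2⟩

namespace IsFuncDefinedOn

variable {I f g x y : ZFSet}

theorem app_eq (hf : IsFuncDefinedOn I f) (h : pair x y ∈ f) : app f x = y := by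
  have hex : ∃ y, pair x y ∈ f := ⟨y, h⟩
  rw [app, dif_pos hex]
  exact hf.2 _ _ _ hex.choose_spec h

theorem pair_mem_iff (hf : IsFuncDefinedOn I f) (hx : x ∈ I) : pair x y ∈ f ↔ app f x = y := by
  refine ⟨hf.app_eq, ?_⟩
  rintro rfl
  obtain ⟨y, hy⟩ := hf.1 x hx
  rwa [hf.app_eq hy]

theorem app_eq_app_iff (hf : IsFuncDefinedOn I f) (hg : IsFuncDefinedOn I g) (hx : x ∈ I) :
    app f x = app g x ↔ ∃ y, pair x y ∈ f ∧ pair x y ∈ g := by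
  simp only [hf.pair_mem_iff hx, hg.pair_mem_iff hx, exists_eq_left']
  exact eq_comm

theorem app_mem_app_iff (hf : IsFuncDefinedOn I f) (hg : IsFuncDefinedOn I g) (hx : x ∈ I) :
    app f x ∈ app g x ↔ ∃ y z, pair x y ∈ f ∧ pair x z ∈ g ∧ y ∈ z := by
  simp only [hf.pair_mem_iff hx, hg.pair_mem_iff hx, exists_and_left, exists_eq_left']

end IsFuncDefinedOn

namespace LEps

variable {S : Type*} {m k : ℕ}

def liftVar : Fin m ⊕ Fin k → Fin m ⊕ Fin (k + 1) := Sum.map id Fin.castSucc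

def lastVar : Fin m ⊕ Fin (k + 1) := Sum.inr (Fin.last k)

def memF (x y : Fin m ⊕ Fin k) : Lε.BoundedFormula (Fin m) k :=
  adj.boundedFormula₂ (Term.var x) (Term.var y)

def eqF (x y : Fin m ⊕ Fin k) : Lε.BoundedFormula (Fin m) k :=
  (Term.var x).bdEqual (Term.var y)

@[simp] theorem elim_snoc_liftVar (v : Fin m → S) (xs : Fin k → S) (a : S)
    (x : Fin m ⊕ Fin k) : Sum.elim v (Fin.snoc xs a) (liftVar x) = Sum.elim v xs x := by
  rcases x with i | i <;> simp [liftVar]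

@[simp] theorem elim_snoc_lastVar (v : Fin m → S) (xs : Fin k → S) (a : S) :
    Sum.elim v (Fin.snoc xs a) lastVar = a := by
  simp [lastVar]

structure IsTransitiveEmbedding (e : S → ZFSet.{u}) : Prop where
  injective : Function.Injective e
  mem_range : ∀ {a : S} {y : ZFSet}, y ∈ e a → y ∈ Set.range e

def Holds (e : S → ZFSet) (φ : Lε.BoundedFormula (Fin m) k) (v : Fin m → S)
    (xs : Fin k → S) : Prop :=
  @BoundedFormula.Realize Lε S (memStruc S fun a b => e a ∈ e b) _ _ φ v xs

variable {e : S → ZFSet.{u}} {v : Fin m → S} {xs : Fin k → S}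

@[simp] theorem holds_memF (x y : Fin m ⊕ Fin k) :
    Holds e (memF x y) v xs ↔ e (Sum.elim v xs x) ∈ e (Sum.elim v xs y) := by
  let := memStruc S fun a b => e a ∈ e b
  exact BoundedFormula.realize_rel₂

theorem holds_eqF (he : Function.Injective e) (x y : Fin m ⊕ Fin k) :
    Holds e (eqF x y) v xs ↔ e (Sum.elim v xs x) = e (Sum.elim v xs y) :=
  he.eq_iff.symm

@[simp] theorem holds_inf (φ ψ : Lε.BoundedFormula (Fin m) k) :
    Holds e (φ ⊓ ψ) v xs ↔ Holds e φ v xs ∧ Holds e ψ v xs := by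
  let := memStruc S fun a b => e a ∈ e b
  exact BoundedFormula.realize_inf

@[simp] theorem holds_sup (φ ψ : Lε.BoundedFormula (Fin m) k) :
    Holds e (φ ⊔ ψ) v xs ↔ Holds e φ v xs ∨ Holds e ψ v xs := by
  let := memStruc S fun a b => e a ∈ e b
  exact BoundedFormula.realize_sup

@[simp] theorem holds_imp (φ ψ : Lε.BoundedFormula (Fin m) k) :
    Holds e (φ ⟹ ψ) v xs ↔ (Holds e φ v xs → Holds e ψ v xs) := by
  let := memStruc S fun a b => e a ∈ e b
  exact BoundedFormula.realize_imp

@[simp] theorem holds_iff (φ ψ : Lε.BoundedFormula (Fin m) k) :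
    Holds e (φ ⇔ ψ) v xs ↔ (Holds e φ v xs ↔ Holds e ψ v xs) := by
  let := memStruc S fun a b => e a ∈ e b
  exact BoundedFormula.realize_iff

@[simp] theorem holds_all (φ : Lε.BoundedFormula (Fin m) (k + 1)) :
    Holds e (∀' φ) v xs ↔ ∀ a, Holds e φ v (Fin.snoc xs a) := by
  let := memStruc S fun a b => e a ∈ e b
  exact BoundedFormula.realize_all

@[simp] theorem holds_ex (φ : Lε.BoundedFormula (Fin m) (k + 1)) :
    Holds e (∃' φ) v xs ↔ ∃ a, Holds e φ v (Fin.snoc xs a) := by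
  let := memStruc S fun a b => e a ∈ e b
  exact BoundedFormula.realize_ex

theorem IsTransitiveEmbedding.mem_range_of_pair_mem (he : IsTransitiveEmbedding e) {a : S}
    {x y : ZFSet} (h : pair x y ∈ e a) : x ∈ Set.range e ∧ y ∈ Set.range e := by
  obtain ⟨b, hb⟩ := he.mem_range h
  obtain ⟨c, hc⟩ := he.mem_range (a := b) (by rw [hb, pair]; exact mem_pair.2 (Or.inr rfl))
  exact ⟨he.mem_range (a := c) (by rw [hc]; exact mem_pair.2 (Or.inl rfl)),
    he.mem_range (a := c) (by rw [hc]; exact mem_pair.2 (Or.inr rfl))⟩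

def upairF (q x y : Fin m ⊕ Fin k) : Lε.BoundedFormula (Fin m) k :=
  memF x q ⊓ memF y q ⊓
    ∀' (memF lastVar (liftVar q) ⟹ (eqF lastVar (liftVar x) ⊔ eqF lastVar (liftVar y)))

def opairF (z x y : Fin m ⊕ Fin k) : Lε.BoundedFormula (Fin m) k :=
  ∃' ∃' (upairF (liftVar (liftVar z)) (liftVar lastVar) lastVar ⊓
    upairF (liftVar lastVar) (liftVar (liftVar x)) (liftVar (liftVar x)) ⊓
    upairF lastVar (liftVar (liftVar x)) (liftVar (liftVar y)))

def opairMemF (x y f : Fin m ⊕ Fin k) : Lε.BoundedFormula (Fin m) k :=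
  ∃' (memF lastVar (liftVar f) ⊓ opairF lastVar (liftVar x) (liftVar y))

theorem holds_upairF (he : IsTransitiveEmbedding e) (q x y : Fin m ⊕ Fin k) :
    Holds e (upairF q x y) v xs ↔
      e (Sum.elim v xs q) = {e (Sum.elim v xs x), e (Sum.elim v xs y)} := by
  simp only [upairF, holds_inf, holds_all, holds_imp, holds_sup, holds_memF, holds_eqF he.injective,
    elim_snoc_liftVar, elim_snoc_lastVar]
  constructor
  · rintro ⟨⟨hx, hy⟩, hq⟩
    ext z
    refine ⟨fun hz => ?_, fun hz => ?_⟩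
    · obtain ⟨a, rfl⟩ := he.mem_range hz
      exact mem_pair.2 (hq a hz)
    · rcases mem_pair.1 hz with rfl | rfl <;> assumption
  · intro hq
    simp only [hq, mem_pair, true_or, or_true, and_self, imp_self, implies_true]

theorem holds_opairF (he : IsTransitiveEmbedding e) (z x y : Fin m ⊕ Fin k) :
    Holds e (opairF z x y) v xs ↔
      e (Sum.elim v xs z) = pair (e (Sum.elim v xs x)) (e (Sum.elim v xs y)) := by
  simp only [opairF, holds_ex, holds_inf, holds_upairF he, elim_snoc_liftVar, elim_snoc_lastVar]
  constructor
  · rintro ⟨a, b, ⟨hz, ha⟩, hb⟩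
    rw [hz, ha, hb, pair_eq_singleton, pair]
  · intro hz
    obtain ⟨a, ha⟩ := he.mem_range (a := Sum.elim v xs z)
      (by rw [hz, pair]; exact mem_pair.2 (Or.inl rfl))
    obtain ⟨b, hb⟩ := he.mem_range (a := Sum.elim v xs z)
      (by rw [hz, pair]; exact mem_pair.2 (Or.inr rfl))
    exact ⟨a, b, ⟨by rw [hz, ha, hb, pair], by rw [ha, pair_eq_singleton]⟩, hb⟩

theorem holds_opairMemF (he : IsTransitiveEmbedding e) (x y f : Fin m ⊕ Fin k) :
    Holds e (opairMemF x y f) v xs ↔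
      pair (e (Sum.elim v xs x)) (e (Sum.elim v xs y)) ∈ e (Sum.elim v xs f) := by
  simp only [opairMemF, holds_ex, holds_inf, holds_memF, holds_opairF he, elim_snoc_liftVar,
    elim_snoc_lastVar]
  constructor
  · rintro ⟨a, ha, hpair⟩
    rwa [← hpair]
  · intro h
    obtain ⟨a, ha⟩ := he.mem_range h
    exact ⟨a, ha ▸ h, ha⟩

def DefinesAbsolutely (φ : Lε.Formula (Fin m)) (Φ : (Fin m → ZFSet.{u}) → Prop) : Prop :=
  ∀ (S : Type (u + 1)) (e : S → ZFSet.{u}), IsTransitiveEmbedding e →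
    ∀ v, Holds e φ v default ↔ Φ (e ∘ v)

def funOnF (f I : Fin m) : Lε.Formula (Fin m) :=
  (∀' (memF lastVar (Sum.inl I) ⟹ ∃' opairMemF (liftVar lastVar) lastVar (Sum.inl f))) ⊓
    ∀' ∀' ∀' (opairMemF (liftVar (liftVar lastVar)) (liftVar lastVar) (Sum.inl f) ⊓
      opairMemF (liftVar (liftVar lastVar)) lastVar (Sum.inl f) ⟹ eqF (liftVar lastVar) lastVar)

theorem definesAbsolutely_funOnF (f I : Fin m) :
    DefinesAbsolutely (funOnF f I) fun w => IsFuncDefinedOn (w I) (w f) := by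
  intro S e he v
  simp only [funOnF, IsFuncDefinedOn, holds_inf, holds_all, holds_imp, holds_ex, holds_memF,
    holds_opairMemF he, holds_eqF he.injective, elim_snoc_liftVar, elim_snoc_lastVar, Sum.elim_inl,
    Function.comp_apply]
  constructor
  · rintro ⟨hdom, hsv⟩
    refine ⟨fun x hx => ?_, fun x y y' hy hy' => ?_⟩
    · obtain ⟨a, rfl⟩ := he.mem_range hx
      obtain ⟨b, hb⟩ := hdom a hx
      exact ⟨_, hb⟩
    · obtain ⟨⟨a, rfl⟩, ⟨b, rfl⟩⟩ := he.mem_range_of_pair_mem hy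
      obtain ⟨c, rfl⟩ := (he.mem_range_of_pair_mem hy').2
      exact hsv a b c ⟨hy, hy'⟩
  · rintro ⟨hdom, hsv⟩
    refine ⟨fun a ha => ?_, fun a b c h => hsv _ _ _ h.1 h.2⟩
    obtain ⟨y, hy⟩ := hdom _ ha
    obtain ⟨b, rfl⟩ := (he.mem_range_of_pair_mem hy).2
    exact ⟨b, hy⟩

def sepF (A I : Fin m) (ψ : Lε.BoundedFormula (Fin m) 1) : Lε.Formula (Fin m) :=
  ∀' (memF lastVar (Sum.inl A) ⇔ (memF lastVar (Sum.inl I) ⊓ ψ))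

theorem holds_sepF (he : IsTransitiveEmbedding e) (A I : Fin m)
    {ψ : Lε.BoundedFormula (Fin m) 1} {Ψ : ZFSet → Prop}
    (hψ : ∀ a, Holds e ψ v (Fin.snoc default a) ↔ Ψ (e a)) :
    Holds e (sepF A I ψ) v default ↔ ∀ x, x ∈ e (v A) ↔ x ∈ e (v I) ∧ Ψ x := by
  simp only [sepF, holds_all, holds_iff, holds_inf, holds_memF, hψ, elim_snoc_lastVar,
    Sum.elim_inl]
  refine ⟨fun h x => ?_, fun h a => h (e a)⟩
  by_cases hx : x ∈ Set.range e
  · obtain ⟨a, rfl⟩ := hx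
    exact h a
  · exact iff_of_false (fun hA => hx (he.mem_range hA)) (fun hI => hx (he.mem_range hI.1))

def appEqF (f g : Fin m) : Lε.BoundedFormula (Fin m) (k + 1) :=
  ∃' (opairMemF (liftVar lastVar) lastVar (Sum.inl f) ⊓
    opairMemF (liftVar lastVar) lastVar (Sum.inl g))

def appMemF (f g : Fin m) : Lε.BoundedFormula (Fin m) (k + 1) :=
  ∃' ∃' (opairMemF (liftVar (liftVar lastVar)) (liftVar lastVar) (Sum.inl f) ⊓
    opairMemF (liftVar (liftVar lastVar)) lastVar (Sum.inl g) ⊓ memF (liftVar lastVar) lastVar)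

theorem holds_appEqF (he : IsTransitiveEmbedding e) (f g : Fin m) (a : S) :
    Holds e (appEqF f g) v (Fin.snoc xs a) ↔
      ∃ y, pair (e a) y ∈ e (v f) ∧ pair (e a) y ∈ e (v g) := by
  simp only [appEqF, holds_ex, holds_inf, holds_opairMemF he, elim_snoc_liftVar,
    elim_snoc_lastVar, Sum.elim_inl]
  refine ⟨fun ⟨b, hb⟩ => ⟨e b, hb⟩, fun ⟨y, hf, hg⟩ => ?_⟩
  obtain ⟨b, rfl⟩ := (he.mem_range_of_pair_mem hf).2
  exact ⟨b, hf, hg⟩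

theorem holds_appMemF (he : IsTransitiveEmbedding e) (f g : Fin m) (a : S) :
    Holds e (appMemF f g) v (Fin.snoc xs a) ↔
      ∃ y z, pair (e a) y ∈ e (v f) ∧ pair (e a) z ∈ e (v g) ∧ y ∈ z := by
  simp only [appMemF, holds_ex, holds_inf, holds_memF, holds_opairMemF he, elim_snoc_liftVar,
    elim_snoc_lastVar, Sum.elim_inl, and_assoc]
  refine ⟨fun ⟨b, c, hbc⟩ => ⟨e b, e c, hbc⟩, fun ⟨y, z, hf, hg, hyz⟩ => ?_⟩
  obtain ⟨b, rfl⟩ := (he.mem_range_of_pair_mem hf).2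
  obtain ⟨c, rfl⟩ := (he.mem_range_of_pair_mem hg).2
  exact ⟨b, c, hf, hg, hyz⟩

theorem definesAbsolutely_sepF_appEqF (f g A I : Fin m) :
    DefinesAbsolutely (sepF A I (appEqF f g)) fun w =>
      ∀ x, x ∈ w A ↔ x ∈ w I ∧ ∃ y, pair x y ∈ w f ∧ pair x y ∈ w g :=
  fun _ _ he _ => holds_sepF he A I (holds_appEqF he f g)

theorem definesAbsolutely_sepF_appMemF (f g A I : Fin m) :
    DefinesAbsolutely (sepF A I (appMemF f g)) fun w =>
      ∀ x, x ∈ w A ↔ x ∈ w I ∧ ∃ y z, pair x y ∈ w f ∧ pair x z ∈ w g ∧ y ∈ z :=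
  fun _ _ he _ => holds_sepF he A I (holds_appMemF he f g)

end LEps

structure IsElementaryEmbedding (M : ZFSet.{v} → Prop) (j : ZFSet.{u} → {x : ZFSet.{v} // M x}) :
    Prop where
  trans : ∀ x y : ZFSet, M x → y ∈ x → M y
  realizeIn_iff : ∀ (n : ℕ) (φ : Lε.Formula (Fin n)) (v : Fin n → ZFSet.{u}),
    RealizeIn ZFSet (· ∈ ·) φ v ↔
      RealizeIn {x : ZFSet // M x} (fun a b => a.1 ∈ b.1) φ (fun i => j (v i))

namespace IsElementaryEmbedding

open LEps

variable {M : ZFSet.{v} → Prop} {j : ZFSet.{u} → {x : ZFSet.{v} // M x}} {I f g : ZFSet.{u}}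
  {a : ZFSet.{v}}

theorem isTransitiveEmbedding_val (hj : IsElementaryEmbedding M j) :
    IsTransitiveEmbedding (Subtype.val : {x : ZFSet // M x} → ZFSet) :=
  ⟨Subtype.val_injective, fun {b y} hy => ⟨⟨y, hj.trans b.1 y b.2 hy⟩, rfl⟩⟩

theorem iff_of_definesAbsolutely (hj : IsElementaryEmbedding M j) {m : ℕ}
    {φ : Lε.Formula (Fin m)} {Φ : (Fin m → ZFSet.{u}) → Prop} {Ψ : (Fin m → ZFSet.{v}) → Prop}
    (hΦ : DefinesAbsolutely φ Φ) (hΨ : DefinesAbsolutely φ Ψ) (w : Fin m → ZFSet) :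
    Φ w ↔ Ψ fun i => (j (w i)).1 :=
  (hΦ _ id ⟨Function.injective_id, fun {_ y} _ => ⟨y, rfl⟩⟩ w).symm.trans
    ((hj.realizeIn_iff m φ w).trans (hΨ _ Subtype.val hj.isTransitiveEmbedding_val _))

theorem isFuncDefinedOn (hj : IsElementaryEmbedding M j) (hf : IsFuncDefinedOn I f) :
    IsFuncDefinedOn (j I).1 (j f).1 :=
  (hj.iff_of_definesAbsolutely (definesAbsolutely_funOnF 0 1)
    (definesAbsolutely_funOnF 0 1) ![f, I]).1 hf

theorem mem_sep_app_eq_iff (hj : IsElementaryEmbedding M j) (hf : IsFuncOn I f)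
    (hg : IsFuncOn I g) (ha : a ∈ (j I).1) :
    a ∈ (j (ZFSet.sep (fun x => app f x = app g x) I)).1 ↔ app (j f).1 a = app (j g).1 a := by
  have hsep := (hj.iff_of_definesAbsolutely (definesAbsolutely_sepF_appEqF 0 1 2 3)
    (definesAbsolutely_sepF_appEqF 0 1 2 3)
    ![f, g, ZFSet.sep (fun x => app f x = app g x) I, I]).1 fun x => by
      simp only [Matrix.cons_val, mem_sep]
      exact and_congr_right (hf.isFuncDefinedOn.app_eq_app_iff hg.isFuncDefinedOn)
  simp only [Matrix.cons_val] at hsep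
  rw [hsep, (hj.isFuncDefinedOn hf.isFuncDefinedOn).app_eq_app_iff
    (hj.isFuncDefinedOn hg.isFuncDefinedOn) ha]
  exact and_iff_right ha

theorem mem_sep_app_mem_iff (hj : IsElementaryEmbedding M j) (hf : IsFuncOn I f)
    (hg : IsFuncOn I g) (ha : a ∈ (j I).1) :
    a ∈ (j (ZFSet.sep (fun x => app f x ∈ app g x) I)).1 ↔ app (j f).1 a ∈ app (j g).1 a := by
  have hsep := (hj.iff_of_definesAbsolutely (definesAbsolutely_sepF_appMemF 0 1 2 3)
    (definesAbsolutely_sepF_appMemF 0 1 2 3)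
    ![f, g, ZFSet.sep (fun x => app f x ∈ app g x) I, I]).1 fun x => by
      simp only [Matrix.cons_val, mem_sep]
      exact and_congr_right (hf.isFuncDefinedOn.app_mem_app_iff hg.isFuncDefinedOn)
  simp only [Matrix.cons_val] at hsep
  rw [hsep, (hj.isFuncDefinedOn hf.isFuncDefinedOn).app_mem_app_iff
    (hj.isFuncDefinedOn hg.isFuncDefinedOn) ha]
  exact and_iff_right ha

end IsElementaryEmbedding

theorem claim_2_4_1_general (κ lam : ZFSet)
    (M : ZFSet → Prop) (hMtrans : ∀ x y : ZFSet, M x → y ∈ x → M y)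
    (j : ZFSet → {x : ZFSet // M x})
    (helem : ∀ (n : ℕ) (φ : Lε.Formula (Fin n)) (v : Fin n → ZFSet),
      RealizeIn ZFSet (· ∈ ·) φ v ↔
        RealizeIn {x : ZFSet // M x} (fun a b => a.1 ∈ b.1) φ (fun i => j (v i)))
    (jlam : ZFSet) (hjlammem : jlam ∈ (j (Pk κ lam)).1) :
    (∀ f g : ZFSet, IsFuncOn (Pk κ lam) f → IsFuncOn (Pk κ lam) g →
      ((ZFSet.sep (fun x => app f x = app g x) (Pk κ lam) ∈
          {A : ZFSet | A ⊆ Pk κ lam ∧ jlam ∈ (j A).1}) ↔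
            app (j f).1 jlam = app (j g).1 jlam) ∧
      ((ZFSet.sep (fun x => app f x ∈ app g x) (Pk κ lam) ∈
          {A : ZFSet | A ⊆ Pk κ lam ∧ jlam ∈ (j A).1}) ↔
            app (j f).1 jlam ∈ app (j g).1 jlam)) ∧
    WellFounded (fun f g : {h : ZFSet // IsFuncOn (Pk κ lam) h} =>
      ZFSet.sep (fun x => app f.1 x ∈ app g.1 x) (Pk κ lam) ∈
        {A : ZFSet | A ⊆ Pk κ lam ∧ jlam ∈ (j A).1}) := by
  have hj : IsElementaryEmbedding M j := ⟨hMtrans, helem⟩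
  refine ⟨fun f g hf hg => ⟨?_, ?_⟩, Subrelation.wf
    (fun {f g} h => (hj.mem_sep_app_mem_iff f.2 g.2 hjlammem).1 h.2)
    (InvImage.wf (fun f : {h : ZFSet // IsFuncOn (Pk κ lam) h} => app (j f.1).1 jlam) mem_wf)⟩
  · exact (and_iff_right sep_subset).trans (hj.mem_sep_app_eq_iff hf hg hjlammem)
  · exact (and_iff_right sep_subset).trans (hj.mem_sep_app_mem_iff hf hg hjlammem)

/-- Claim 2.4.1 (single-universe form): with `U_j := {A ⊆ 𝒫_κ(λ) : j''λ ∈ j(A)}` and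
`𝒲` the ZFSet-functions with domain `𝒫_κ(λ)`, for all `f, g ∈ 𝒲` we have
`{x : f(x) = g(x)} ∈ U_j ↔ j(f)(j''λ) = j(g)(j''λ)` and
`{x : f(x) ∈ g(x)} ∈ U_j ↔ j(f)(j''λ) ∈ j(g)(j''λ)`; consequently the relation
`∈_{U_j}` on `𝒲` is well-founded, i.e. `U_j` is steep. -/
theorem claim_2_4_1 (κ lam : ZFSet) (hκcard : IsCard κ) (hlam : IsOrd lam) (hkl : κ ⊆ lam)
    (M : ZFSet → Prop) (hMtrans : ∀ x y : ZFSet, M x → y ∈ x → M y)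
    (j : ZFSet → {x : ZFSet // M x})
    (helem : ∀ (n : ℕ) (φ : Lε.Formula (Fin n)) (v : Fin n → ZFSet),
      RealizeIn ZFSet (· ∈ ·) φ v ↔
        RealizeIn {x : ZFSet // M x} (fun a b => a.1 ∈ b.1) φ (fun i => j (v i)))
    (hcrit : ∀ ξ ∈ κ, (j ξ).1 = ξ)
    (hjump : lam ∈ (j κ).1)
    (jlam : ZFSet) (hjlam : ∀ y : ZFSet, y ∈ jlam ↔ ∃ ξ ∈ lam, (j ξ).1 = y)
    (hMjlam : M jlam) (hjlammem : jlam ∈ (j (Pk κ lam)).1) :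
    (∀ f g : ZFSet, IsFuncOn (Pk κ lam) f → IsFuncOn (Pk κ lam) g →
      ((ZFSet.sep (fun x => app f x = app g x) (Pk κ lam) ∈
          {A : ZFSet | A ⊆ Pk κ lam ∧ jlam ∈ (j A).1}) ↔
            app (j f).1 jlam = app (j g).1 jlam) ∧
      ((ZFSet.sep (fun x => app f x ∈ app g x) (Pk κ lam) ∈
          {A : ZFSet | A ⊆ Pk κ lam ∧ jlam ∈ (j A).1}) ↔
            app (j f).1 jlam ∈ app (j g).1 jlam)) ∧
    WellFounded (fun f g : {h : ZFSet // IsFuncOn (Pk κ lam) h} =>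
      ZFSet.sep (fun x => app f.1 x ∈ app g.1 x) (Pk κ lam) ∈
        {A : ZFSet | A ⊆ Pk κ lam ∧ jlam ∈ (j A).1}) :=
  claim_2_4_1_general κ lam M hMtrans j helem jlam hjlammem
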